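/- arXiv:1503.01663 — 2 statements merged into one kernel-verified Lean document; each statement's English description precedes it below -/
import Mathlib

section
/- Let $a_1,\dots,a_n$ be unit vectors in $\mathbb{R}^d$ and let $z \in [0,1]^n$ with $\sum_i z_i = 1$ be a distribution. Then for every $\varepsilon \in (0,1]$ there exists a distribution $w \in [0,1]^n$ with $\sum_i w_i = 1$ whose support has at most $\lceil 1/\varepsilon^2 \rceil$ nonzero entries, such that $\left\| \sum_i z_i a_i - \sum_i w_i a_i \right\|_2 \le \varepsilon$. -/
/-!
Maurey's empirical method, derandomized. For weights `z` with mean `μ = ∑ zᵢ aᵢ` and any `v`,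
the `z`-average of `‖v + aᵢ - μ‖²` is `‖v‖² + ∑ zᵢ ‖aᵢ‖² - ‖μ‖² ≤ ‖v‖² + 1`, so some index `i`
does at least as well. Choosing `k = ⌈1/ε²⌉` indices greedily this way keeps
`‖∑ⱼ a_{gⱼ} - k μ‖² ≤ k`, and the empirical distribution of the chosen indices, supported on at
most `k` points, is then within `1/√k ≤ ε` of `μ`.
-/

open Finset

section

variable {ι E : Type*} [Fintype ι] [NormedAddCommGroup E] [InnerProductSpace ℝ E]
  {z : ι → ℝ}

theorem exists_le_sum_mul_of_sum_eq_one (F : ι → ℝ) (hz0 : ∀ i, 0 ≤ z i)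
    (hz1 : ∑ i, z i = 1) : ∃ i, F i ≤ ∑ i, z i * F i := by
  simpa [centerMass, hz1] using
    inf_le_centerMass (s := univ) (f := F) (fun i _ => hz0 i) (by rw [hz1]; exact one_pos)

theorem sum_mul_norm_add_sq (hz1 : ∑ i, z i = 1) (v : E) (b : ι → E) :
    ∑ i, z i * ‖v + b i‖ ^ 2 =
      ‖v‖ ^ 2 + 2 * inner ℝ v (∑ i, z i • b i) + ∑ i, z i * ‖b i‖ ^ 2 := by
  simp only [norm_add_sq_real, mul_add, sum_add_distrib, ← sum_mul, hz1, inner_sum,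
    real_inner_smul_right, mul_sum]
  ring_nf

variable {a : ι → E} {R : ℝ}

theorem exists_norm_add_sub_sq_le (hz0 : ∀ i, 0 ≤ z i) (hz1 : ∑ i, z i = 1)
    (ha : ∀ i, ‖a i‖ ≤ R) (v : E) :
    ∃ i, ‖v + a i - ∑ j, z j • a j‖ ^ 2 ≤ ‖v‖ ^ 2 + R ^ 2 := by
  set μ := ∑ j, z j • a j
  have hmoment : ∑ i, z i * ‖a i‖ ^ 2 ≤ R ^ 2 := calc
    ∑ i, z i * ‖a i‖ ^ 2 ≤ ∑ i, z i * R ^ 2 := by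
      gcongr with i; exacts [hz0 i, ha i]
    _ = R ^ 2 := by rw [← sum_mul, hz1, one_mul]
  have hshift : ‖v - μ‖ ^ 2 + 2 * inner ℝ (v - μ) μ = ‖v‖ ^ 2 - ‖μ‖ ^ 2 := by
    rw [norm_sub_sq_real, inner_sub_left, real_inner_self_eq_norm_sq]; ring
  obtain ⟨i, hi⟩ := exists_le_sum_mul_of_sum_eq_one (fun i => ‖(v - μ) + a i‖ ^ 2) hz0 hz1
  refine ⟨i, ?_⟩
  rw [← sub_add_eq_add_sub]
  calc ‖(v - μ) + a i‖ ^ 2 ≤ ∑ i, z i * ‖(v - μ) + a i‖ ^ 2 := hi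
    _ = ‖v‖ ^ 2 - ‖μ‖ ^ 2 + ∑ i, z i * ‖a i‖ ^ 2 := by rw [sum_mul_norm_add_sq hz1, ← hshift]
    _ ≤ ‖v‖ ^ 2 + R ^ 2 := by nlinarith [sq_nonneg ‖μ‖]

theorem exists_norm_sum_sub_smul_sq_le (hz0 : ∀ i, 0 ≤ z i) (hz1 : ∑ i, z i = 1)
    (ha : ∀ i, ‖a i‖ ≤ R) (k : ℕ) :
    ∃ g : Fin k → ι, ‖∑ j, a (g j) - (k : ℝ) • ∑ i, z i • a i‖ ^ 2 ≤ k * R ^ 2 := by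
  set μ := ∑ i, z i • a i
  induction k with
  | zero => exact ⟨finZeroElim, by simp⟩
  | succ k ih =>
    obtain ⟨g, hg⟩ := ih
    obtain ⟨i, hi⟩ := exists_norm_add_sub_sq_le hz0 hz1 ha (∑ j, a (g j) - (k : ℝ) • μ)
    refine ⟨Fin.cons i g, ?_⟩
    have hstep : ∑ j, a ((Fin.cons i g : Fin (k + 1) → ι) j) - ((k + 1 : ℕ) : ℝ) • μ
        = ∑ j, a (g j) - (k : ℝ) • μ + a i - μ := by
      rw [Fin.sum_univ_succ, Fin.cons_zero]
      simp only [Fin.cons_succ, Nat.cast_succ, add_smul, one_smul]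
      abel
    rw [hstep, Nat.cast_succ]
    linarith

end

section

variable {ι : Type*} [DecidableEq ι] {k : ℕ} (g : Fin k → ι)

noncomputable def empiricalDist (i : ι) : ℝ :=
  #{j | g j = i} / k

theorem empiricalDist_nonneg (i : ι) : 0 ≤ empiricalDist g i := by
  unfold empiricalDist; positivity

theorem support_empiricalDist_subset : Function.support (empiricalDist g) ⊆ Set.range g :=
  Function.support_subset_iff'.2 fun i hi => by simp_all [empiricalDist]

theorem ncard_support_empiricalDist_le : (Function.support (empiricalDist g)).ncard ≤ k :=
  calc _ ≤ (Set.range g).ncard := Set.ncard_le_ncard (support_empiricalDist_subset g)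
    _ ≤ k := by
      rw [← Set.image_univ]
      exact (Set.ncard_image_le Set.finite_univ).trans (by simp)

theorem sum_empiricalDist_smul [Fintype ι] {M : Type*} [AddCommGroup M] [Module ℝ M]
    (a : ι → M) :
    ∑ i, empiricalDist g i • a i = (k : ℝ)⁻¹ • ∑ j, a (g j) := by
  simp_rw [empiricalDist, div_eq_inv_mul, mul_smul, ← smul_sum, card_eq_sum_ones, Nat.cast_sum,
    sum_smul, sum_filter]
  rw [sum_comm]
  simp

theorem sum_empiricalDist [Fintype ι] (hk : k ≠ 0) : ∑ i, empiricalDist g i = 1 := by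
  simpa [hk] using sum_empiricalDist_smul g (fun _ => (1 : ℝ))

end

theorem exists_norm_sub_sum_empiricalDist_smul_sq_le {ι E : Type*} [Fintype ι] [DecidableEq ι]
    [NormedAddCommGroup E] [InnerProductSpace ℝ E] {z : ι → ℝ} (hz0 : ∀ i, 0 ≤ z i)
    (hz1 : ∑ i, z i = 1) {a : ι → E} {R : ℝ} (ha : ∀ i, ‖a i‖ ≤ R) {k : ℕ} (hk : k ≠ 0) :
    ∃ g : Fin k → ι, ‖∑ i, z i • a i - ∑ i, empiricalDist g i • a i‖ ^ 2 ≤ R ^ 2 / k := by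
  obtain ⟨g, hg⟩ := exists_norm_sum_sub_smul_sq_le hz0 hz1 ha k
  refine ⟨g, ?_⟩
  have hkR : (k : ℝ) ≠ 0 := Nat.cast_ne_zero.2 hk
  have hrescale : ∑ i, z i • a i - ∑ i, empiricalDist g i • a i
      = -(k : ℝ)⁻¹ • (∑ j, a (g j) - (k : ℝ) • ∑ i, z i • a i) := by
    rw [sum_empiricalDist_smul, neg_smul, smul_sub, smul_smul, inv_mul_cancel₀ hkR, one_smul,
      neg_sub]
  rw [hrescale, norm_smul, mul_pow, norm_neg, norm_inv, Real.norm_natCast]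
  calc (k : ℝ)⁻¹ ^ 2 * ‖∑ j, a (g j) - (k : ℝ) • ∑ i, z i • a i‖ ^ 2
      ≤ (k : ℝ)⁻¹ ^ 2 * (k * R ^ 2) := by gcongr
    _ = R ^ 2 / k := by field_simp

theorem ifa_l2_approx_general (n d : ℕ) (a : Fin n → EuclideanSpace ℝ (Fin d))
    (ha : ∀ i, ‖a i‖ = 1) (z : Fin n → ℝ) (hz0 : ∀ i, 0 ≤ z i)
    (hz1 : ∑ i, z i = 1) (ε : ℝ) (hε : 0 < ε) :
    ∃ w : Fin n → ℝ, (∀ i, 0 ≤ w i) ∧ (∑ i, w i = 1) ∧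
      (Function.support w).toFinite.toFinset.card ≤ ⌈1 / ε ^ 2⌉₊ ∧
      ‖∑ i, z i • a i - ∑ i, w i • a i‖ ≤ ε := by
  set k := ⌈1 / ε ^ 2⌉₊
  have hk : k ≠ 0 := (Nat.ceil_pos.2 (by positivity)).ne'
  have hkε : 1 / (k : ℝ) ≤ ε ^ 2 := by
    rw [div_le_iff₀ (by positivity), mul_comm, ← div_le_iff₀ (by positivity)]
    exact Nat.le_ceil _
  obtain ⟨g, hg⟩ := exists_norm_sub_sum_empiricalDist_smul_sq_le hz0 hz1 (fun i => (ha i).le) hk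
  refine ⟨empiricalDist g, empiricalDist_nonneg g, sum_empiricalDist g hk, ?_, ?_⟩
  · rw [← Set.ncard_eq_toFinset_card]
    exact ncard_support_empiricalDist_le g
  · rw [← pow_le_pow_iff_left₀ (norm_nonneg _) hε.le two_ne_zero]
    exact hg.trans (by rwa [one_pow])

theorem ifa_l2_approx (n d : ℕ) (a : Fin n → EuclideanSpace ℝ (Fin d))
    (ha : ∀ i, ‖a i‖ = 1) (z : Fin n → ℝ) (hz0 : ∀ i, 0 ≤ z i)
    (hz1 : ∑ i, z i = 1) (ε : ℝ) (hε : 0 < ε) (hε1 : ε ≤ 1) :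
    ∃ w : Fin n → ℝ, (∀ i, 0 ≤ w i) ∧ (∑ i, w i = 1) ∧
      (Function.support w).toFinite.toFinset.card ≤ ⌈1 / ε ^ 2⌉₊ ∧
      ‖∑ i, z i • a i - ∑ i, w i • a i‖ ≤ ε :=
  ifa_l2_approx_general n d a ha z hz0 hz1 ε hε
end

section
/- Let $p \in \Delta^{n-1}$ be a point in the convex hull of unit vectors $a_1,\dots,a_n \in \mathbb{R}^d$ expressed as $p = \sum_i z_i a_i$. For any $N \ge 1$ there exist indices $i_1,\dots,i_N \in \{1,\dots,n\}$ (with repetition allowed) such that $\left\| p - \frac{1}{N}\sum_{t=1}^N a_{i_t} \right\|_2 \le \frac{1}{\sqrt{N}}$. -/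
/-! Maurey's sampling argument, derandomised. The differences `a i - p` have mean zero under the
weights `z` and variance `∑ z i ‖a i - p‖² = ∑ z i ‖a i‖² - ‖p‖² ≤ 1`, so adding one more
difference raises the `z`-average of the squared norm of a partial sum by exactly the variance.
Choosing each index so that the new squared norm is at most that average gives `N` indices with
`‖∑ₜ (a (iₜ) - p)‖² ≤ N`; dividing by `N` gives the bound `1 / √N`. -/

open Finset

section Maurey

variable {E ι : Type*} [NormedAddCommGroup E] [InnerProductSpace ℝ E] [Fintype ι]
  {w : ι → ℝ}

theorem exists_le_sum_mul_of_sum_eq_one_s1 (hw0 : ∀ i, 0 ≤ w i) (hw1 : ∑ i, w i = 1)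
    (c : ι → ℝ) : ∃ i, c i ≤ ∑ i, w i * c i := by
  obtain ⟨i, -, hi⟩ := (concaveOn_id convex_univ).exists_le_of_centerMass (t := univ)
    (fun i _ => hw0 i) (by simp [hw1]) (fun i _ => Set.mem_univ (c i))
  exact ⟨i, by simpa [centerMass, hw1] using hi⟩

theorem sum_mul_norm_add_sq_of_sum_smul_eq_zero (hw1 : ∑ i, w i = 1) {b : ι → E}
    (hb : ∑ i, w i • b i = 0) (x : E) :
    ∑ i, w i * ‖x + b i‖ ^ 2 = ‖x‖ ^ 2 + ∑ i, w i * ‖b i‖ ^ 2 := by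
  have hcross : ∑ i, w i * (2 * inner ℝ x (b i)) = 0 := by
    simp_rw [mul_left_comm (w _), ← mul_sum, ← real_inner_smul_right, ← inner_sum, hb,
      inner_zero_right, mul_zero]
  simp_rw [norm_add_sq_real, mul_add, sum_add_distrib, ← sum_mul, hw1, hcross]
  ring

theorem sum_smul_sub_sum_smul_eq_zero (hw1 : ∑ i, w i = 1) (a : ι → E) :
    ∑ i, w i • (a i - ∑ j, w j • a j) = 0 := by
  simp only [smul_sub, sum_sub_distrib, ← sum_smul, hw1, one_smul, sub_self]

theorem sum_mul_norm_sub_sq_eq (hw1 : ∑ i, w i = 1) (a : ι → E) :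
    ∑ i, w i * ‖a i - ∑ j, w j • a j‖ ^ 2 = ∑ i, w i * ‖a i‖ ^ 2 - ‖∑ j, w j • a j‖ ^ 2 := by
  have := sum_mul_norm_add_sq_of_sum_smul_eq_zero hw1 (sum_smul_sub_sum_smul_eq_zero hw1 a)
    (∑ j, w j • a j)
  simp only [add_sub_cancel] at this
  linarith

theorem exists_norm_sum_sq_le_mul (hw0 : ∀ i, 0 ≤ w i) (hw1 : ∑ i, w i = 1) {b : ι → E}
    (hb : ∑ i, w i • b i = 0) (M : ℕ) :
    ∃ f : Fin M → ι, ‖∑ t, b (f t)‖ ^ 2 ≤ M * ∑ i, w i * ‖b i‖ ^ 2 := by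
  induction M with
  | zero => exact ⟨Fin.elim0, by simp⟩
  | succ M ih =>
    obtain ⟨f, hf⟩ := ih
    obtain ⟨i, hi⟩ := exists_le_sum_mul_of_sum_eq_one_s1 hw0 hw1
      fun i => ‖∑ t, b (f t) + b i‖ ^ 2
    refine ⟨Fin.snoc f i, ?_⟩
    calc ‖∑ t, b ((Fin.snoc f i : Fin (M + 1) → ι) t)‖ ^ 2 = ‖∑ t, b (f t) + b i‖ ^ 2 := by
          simp [Fin.sum_univ_castSucc]
      _ ≤ ‖∑ t, b (f t)‖ ^ 2 + ∑ i, w i * ‖b i‖ ^ 2 := by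
          rwa [← sum_mul_norm_add_sq_of_sum_smul_eq_zero hw1 hb]
      _ ≤ (M + 1 : ℕ) * ∑ i, w i * ‖b i‖ ^ 2 := by push_cast; linarith

theorem exists_norm_sub_average_le (hw0 : ∀ i, 0 ≤ w i) (hw1 : ∑ i, w i = 1)
    {a : ι → E} (ha : ∀ i, ‖a i‖ ≤ 1) {N : ℕ} (hN : 1 ≤ N) :
    ∃ f : Fin N → ι, ‖∑ j, w j • a j - (N : ℝ)⁻¹ • ∑ t, a (f t)‖ ≤ 1 / √N := by
  set p := ∑ j, w j • a j
  have hcentered := sum_smul_sub_sum_smul_eq_zero hw1 a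
  have hvar : ∑ i, w i * ‖a i - p‖ ^ 2 ≤ 1 := by
    have hsq : ∑ i, w i * ‖a i‖ ^ 2 ≤ 1 := hw1 ▸ sum_le_sum fun i _ =>
      mul_le_of_le_one_right (hw0 i) (pow_le_one₀ (norm_nonneg _) (ha i))
    rw [sum_mul_norm_sub_sq_eq hw1]
    linarith [sq_nonneg ‖p‖]
  obtain ⟨f, hf⟩ := exists_norm_sum_sq_le_mul hw0 hw1 hcentered N
  have hNpos : (0 : ℝ) < N := by exact_mod_cast hN
  have hsum : ‖∑ t, (a (f t) - p)‖ ≤ √N :=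
    Real.le_sqrt_of_sq_le (hf.trans (mul_le_of_le_one_right hNpos.le hvar))
  refine ⟨f, ?_⟩
  have hrewrite : p - (N : ℝ)⁻¹ • ∑ t, a (f t) = -((N : ℝ)⁻¹ • ∑ t, (a (f t) - p)) := by
    simp [sum_sub_distrib, smul_sub, ← Nat.cast_smul_eq_nsmul ℝ, smul_smul, hNpos.ne']
  rw [hrewrite, norm_neg, norm_smul, norm_inv, Real.norm_natCast, inv_mul_le_iff₀ hNpos]
  calc ‖∑ t, (a (f t) - p)‖ ≤ √N := hsum
    _ = N * (1 / √N) := by field_simp; exact Real.sq_sqrt hNpos.le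

end Maurey

theorem approx_caratheodory_sampling (n d : ℕ) (a : Fin n → EuclideanSpace ℝ (Fin d))
    (ha : ∀ i, ‖a i‖ ≤ 1) (z : Fin n → ℝ) (hz0 : ∀ i, 0 ≤ z i)
    (hz1 : ∑ i, z i = 1) (p : EuclideanSpace ℝ (Fin d)) (hp : p = ∑ i, z i • a i)
    (N : ℕ) (hN : 1 ≤ N) :
    ∃ idx : Fin N → Fin n,
      ‖p - (N : ℝ)⁻¹ • ∑ t, a (idx t)‖ ≤ 1 / Real.sqrt N :=
  hp ▸ exists_norm_sub_average_le hz0 hz1 ha hN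
end
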